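/- arXiv:1810.02954 — 3 statements merged into one kernel-verified Lean document; each statement's English description precedes it below -/
import Mathlib

section
/- Lower bound for the expected Euclidean norm via a truncated quadratic loss: Let Z = (Z₁,…,Z_n) ∈ ℝⁿ be a random vector with independent coordinates. Then for every constant K > 0, every deterministic vector a = (a₁,…,a_n) ∈ ℝⁿ, and every t > 0, E‖Z − a‖₂ ≥ (1 − K²·n^{-1}·t^{-2})₊ · (E[L²(Z,a;K)] − n·t)₊^{1/2}, where L(Z,a;K) := ( Σ_{i=1}^n [ (Z_i − a_i)² ∧ K ] )^{1/2} and x₊ := max(x,0). -/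
open MeasureTheory ProbabilityTheory

/-!
The truncated summands `min ((Zᵢ - aᵢ)², K)` are independent and take values in `[0, K]`, so
their sum `S` has variance at most `n K²`. By Chebyshev's inequality, `S ≥ E S - n t` outside an
event of probability at most `K² / (n t²)`, and on that event `‖Z - a‖₂ ≥ √S ≥ √(E S - n t)`.
-/

namespace ProbabilityTheory

variable {Ω : Type*} {mΩ : MeasurableSpace Ω} {μ : Measure Ω} [IsProbabilityMeasure μ]

lemma iIndepFun.variance_sum_le_of_mem_Icc {ι : Type*} {X : ι → Ω → ℝ} {a b : ℝ}
    (hX : iIndepFun X μ) (hm : ∀ i, AEMeasurable (X i) μ)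
    (hb : ∀ i, ∀ᵐ ω ∂μ, X i ω ∈ Set.Icc a b) (s : Finset ι) :
    variance (∑ i ∈ s, X i) μ ≤ s.card * ((b - a) / 2) ^ 2 := by
  have hL2 i : MemLp (X i) 2 μ := memLp_of_bounded (hb i) (hm i).aestronglyMeasurable 2
  rw [IndepFun.variance_sum (fun i _ => hL2 i) fun i _ j _ hij => hX.indepFun hij]
  simpa using Finset.sum_le_sum fun i (_ : i ∈ s) => variance_le_sq_of_bounded (hb i) (hm i)

lemma ofReal_one_sub_variance_div_sq_le_measure {S : Ω → ℝ} (hS : MemLp S 2 μ) {c : ℝ}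
    (hc : 0 < c) :
    ENNReal.ofReal (1 - variance S μ / c ^ 2) ≤ μ {ω | μ[S] - c ≤ S ω} := by
  have hlow : {ω | μ[S] - c ≤ S ω}ᶜ ⊆ {ω | c ≤ |S ω - μ[S]|} := fun ω hω => by
    simp only [Set.mem_compl_iff, Set.mem_ofPred_eq, not_le] at hω ⊢
    rw [abs_sub_comm]
    exact le_abs.mpr (Or.inl (by linarith))
  have hcover : 1 ≤ μ {ω | μ[S] - c ≤ S ω}ᶜ + μ {ω | μ[S] - c ≤ S ω} := by
    rw [← measure_univ (μ := μ), ← Set.compl_union_self]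
    exact measure_union_le _ _
  rw [ENNReal.ofReal_sub _ (div_nonneg (variance_nonneg _ _) (sq_nonneg c)), ENNReal.ofReal_one,
    tsub_le_iff_left]
  calc 1 ≤ _ := hcover
    _ ≤ _ := add_le_add_left ((measure_mono hlow).trans (meas_ge_le_variance_div_sq hS hc)) _

lemma ofReal_mul_ofReal_sqrt_le_lintegral_sqrt {S : Ω → ℝ} (hS : MemLp S 2 μ) {v c : ℝ}
    (hv : variance S μ ≤ v) (hc : 0 < c) :
    ENNReal.ofReal (1 - v / c ^ 2) * ENNReal.ofReal √(μ[S] - c)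
      ≤ ∫⁻ ω, ENNReal.ofReal √(S ω) ∂μ := by
  have hmass : ENNReal.ofReal (1 - v / c ^ 2) ≤ μ {ω | μ[S] - c ≤ S ω} :=
    (ENNReal.ofReal_le_ofReal (by gcongr)).trans (ofReal_one_sub_variance_div_sq_le_measure hS hc)
  have hsub : {ω | μ[S] - c ≤ S ω} ⊆
      {ω | ENNReal.ofReal √(μ[S] - c) ≤ ENNReal.ofReal √(S ω)} :=
    fun ω hω => ENNReal.ofReal_le_ofReal (Real.sqrt_le_sqrt hω)
  calc _ ≤ ENNReal.ofReal √(μ[S] - c) * μ {ω | μ[S] - c ≤ S ω} := by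
        rw [mul_comm]; gcongr
    _ ≤ _ := by gcongr
    _ ≤ _ := mul_meas_ge_le_lintegral₀ hS.aemeasurable.sqrt.ennreal_ofReal _

end ProbabilityTheory

lemma Real.sqrt_max_zero (x : ℝ) : √(max 0 x) = √x := by
  rcases le_total x 0 with h | h
  · simp [h, Real.sqrt_eq_zero'.2 h]
  · simp [h]

/-- **Lower bound for the expected Euclidean norm via a truncated quadratic loss.**
If `Z = (Z₁, …, Z_n)` has independent coordinates then, for every `K > 0`,
every deterministic `a ∈ ℝⁿ` and every `t > 0`,
`E‖Z - a‖₂ ≥ (1 - K² n⁻¹ t⁻²)₊ (E L²(Z,a;K) - n t)₊^{1/2}`,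
where `L(Z,a;K)² = ∑ᵢ ((Zᵢ - aᵢ)² ∧ K)`. -/
theorem statement12
    (n : ℕ) (Ω : Type) [MeasureSpace Ω] (hprob : IsProbabilityMeasure (volume : Measure Ω))
    (Z : Fin n → Ω → ℝ) (hmeas : ∀ i, Measurable (Z i))
    (hindep : iIndepFun Z volume)
    (K : ℝ) (hK : 0 < K) (a : Fin n → ℝ) (t : ℝ) (ht : 0 < t) :
    ENNReal.ofReal (max 0 (1 - K ^ 2 * (n : ℝ)⁻¹ * (t ^ 2)⁻¹) *
        Real.sqrt (max 0 ((∫ ω, ∑ i, min ((Z i ω - a i) ^ 2) K) - n * t)))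
      ≤ ∫⁻ ω, ENNReal.ofReal (Real.sqrt (∑ i, (Z i ω - a i) ^ 2)) := by
  have := hprob
  obtain rfl | hn := Nat.eq_zero_or_pos n
  · simp
  set X : Fin n → Ω → ℝ := fun i ω => min ((Z i ω - a i) ^ 2) K
  have hX_mem i : ∀ᵐ ω, X i ω ∈ Set.Icc 0 K :=
    ae_of_all _ fun ω => ⟨le_min (sq_nonneg _) hK.le, min_le_right _ _⟩
  have htrunc i : Measurable fun x => min ((x - a i) ^ 2) K :=
    ((measurable_id.sub_const (a i)).pow_const 2).min measurable_const
  have hX_meas i : Measurable (X i) := (htrunc i).comp (hmeas i)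
  have hS_var : variance (∑ i, X i) volume ≤ n * K ^ 2 := by
    refine ((hindep.comp _ htrunc).variance_sum_le_of_mem_Icc (fun i => (hX_meas i).aemeasurable)
      hX_mem Finset.univ).trans ?_
    simp only [Finset.card_univ, Fintype.card_fin]
    gcongr; linarith
  have hS_L2 : MemLp (∑ i, X i) 2 volume :=
    memLp_finsetSum' _ fun i _ => memLp_of_bounded (hX_mem i) (hX_meas i).aestronglyMeasurable 2
  have hfactor : K ^ 2 * (n : ℝ)⁻¹ * (t ^ 2)⁻¹ = n * K ^ 2 / (n * t) ^ 2 := by field_simp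
  have hmean : ∫ ω, ∑ i, min ((Z i ω - a i) ^ 2) K = volume[∑ i, X i] := by
    simp only [X, Finset.sum_apply]
  calc _ = ENNReal.ofReal (1 - n * K ^ 2 / (n * t) ^ 2) *
        ENNReal.ofReal √(volume[∑ i, X i] - n * t) := by
        rw [ENNReal.ofReal_mul (le_max_left _ _), ENNReal.ofReal_max, ENNReal.ofReal_zero,
          max_eq_right zero_le, Real.sqrt_max_zero, hfactor, hmean]
    _ ≤ ∫⁻ ω, ENNReal.ofReal √((∑ i, X i) ω) :=
        ofReal_mul_ofReal_sqrt_le_lintegral_sqrt hS_L2 hS_var (mul_pos (Nat.cast_pos.mpr hn) ht)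
    _ ≤ _ := by
        refine lintegral_mono fun ω => ENNReal.ofReal_le_ofReal (Real.sqrt_le_sqrt ?_)
        simpa only [Finset.sum_apply] using Finset.sum_le_sum fun i _ => min_le_left _ _
end

section
/- Hölder continuity of the inverse-shrinkage function: Fix γ > 0 and let H(σ) := √((σ + γ^{-1/2}σ^{-1})(σ + γ^{1/2}σ^{-1})) for σ ≥ 1, which is strictly increasing on (1,∞) with inverse H^{-1} defined on (H(1),∞), H(1) = γ^{1/4} + γ^{-1/4}. Then: (i) for all x₁, x₂ ≥ H(1), |H^{-1}(x₁) − H^{-1}(x₂)| ≤ 2·|x₁ − x₂|^{1/4}·|x₁ + x₂|^{3/4}; consequently (ii) for every a > 0 and ζ > 0, the function f_a defined by f_a(σ) = a^{-1/2}·H^{-1}(a^{-1/2}σ) for σ ≥ τ_a := a^{1/2}H(1) and f_a(σ) = 0 otherwise is (4a^{-1}ζ^{3/4}, 1/4)-Hölder continuous on [τ_a, ζ]: |f_a(x₁) − f_a(x₂)| ≤ 4a^{-1}ζ^{3/4}|x₁ − x₂|^{1/4} for x₁, x₂ ∈ [τ_a, ζ]. -/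
/-! With `h = √γ + 1/√γ ≥ 2` and `u = x² - h`, the inverse reads `H⁻¹(x) = √((u + √(u² - 4)) / 2)`,
and `x ≥ H(1) = √(2 + h)` means `u ≥ 2`. Two nested square roots each halve the Hölder exponent,
via `|√p - √q| ≤ √|p - q|`: first `|Δ√(u² - 4)| ≤ √(|Δu| (u₁ + u₂))`, then the outer root, while
`|Δu| = |x₁ - x₂| (x₁ + x₂)` and `u₁ + u₂ ≤ (x₁ + x₂)²`. This gives exponent `1/4` with constant `1`.
Part (ii) follows by rescaling, `f_a(σ) = b H⁻¹(bσ)` with `b = a^{-1/2}`, and `x₁ + x₂ ≤ 2ζ`. -/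

open Set

noncomputable section

/-- The function `H` describing the asymptotic singular value map:
`H(σ) = √((σ + γ^{-1/2} σ⁻¹)(σ + γ^{1/2} σ⁻¹))` for `σ ≥ 1`,
and `H(σ) = γ^{1/4} + γ^{-1/4}` otherwise. -/
def Hfun (γ σ : ℝ) : ℝ :=
  if 1 ≤ σ then Real.sqrt ((σ + (Real.sqrt γ)⁻¹ * σ⁻¹) * (σ + Real.sqrt γ * σ⁻¹))
  else γ ^ ((1 : ℝ) / 4) + γ ^ (-(1 : ℝ) / 4)

/-- Explicit inverse of `H` on `(H(1), ∞)`: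
`H⁻¹(x) = (1/√2) (x² - h + ((x² - h)² - 4)^{1/2})^{1/2}` with `h = γ^{1/2} + γ^{-1/2}`. -/
def Hinv (γ x : ℝ) : ℝ :=
  Real.sqrt ((x ^ 2 - (Real.sqrt γ + (Real.sqrt γ)⁻¹)
      + Real.sqrt ((x ^ 2 - (Real.sqrt γ + (Real.sqrt γ)⁻¹)) ^ 2 - 4)) / 2)

/-- The inverse-shrinkage function `f_a(σ) = a^{-1/2} H⁻¹(a^{-1/2} σ)` for
`σ ≥ τ_a := a^{1/2} H(1)`, and `f_a(σ) = 0` otherwise. -/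
def famFun (γ a σ : ℝ) : ℝ :=
  if Real.sqrt a * Hfun γ 1 ≤ σ then (Real.sqrt a)⁻¹ * Hinv γ ((Real.sqrt a)⁻¹ * σ)
  else 0

open Real

lemma abs_sqrt_sub_sqrt_le_sqrt_abs_sub {a b : ℝ} (ha : 0 ≤ a) (hb : 0 ≤ b) :
    |√a - √b| ≤ √|a - b| := by
  wlog hab : b ≤ a generalizing a b
  · rw [abs_sub_comm, abs_sub_comm a b]
    exact this hb ha (le_of_not_ge hab)
  rw [abs_of_nonneg (sub_nonneg.2 (sqrt_le_sqrt hab)), abs_of_nonneg (sub_nonneg.2 hab),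
    sub_le_iff_le_add]
  refine sqrt_le_iff.2 ⟨by positivity, ?_⟩
  nlinarith [sq_sqrt (sub_nonneg.2 hab), sq_sqrt hb, mul_nonneg (sqrt_nonneg (a - b)) (sqrt_nonneg b)]

lemma abs_add_sqrt_sq_sub_four_sub_le {u₁ u₂ : ℝ} (hu₁ : 2 ≤ u₁) (hu₂ : 2 ≤ u₂) :
    |(u₁ + √(u₁ ^ 2 - 4)) - (u₂ + √(u₂ ^ 2 - 4))| ≤ 2 * √(|u₁ - u₂| * (u₁ + u₂)) := by
  have hlin : |u₁ - u₂| ≤ √(|u₁ - u₂| * (u₁ + u₂)) := by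
    have : |u₁ - u₂| ≤ u₁ + u₂ := abs_sub_le_iff.2 ⟨by linarith, by linarith⟩
    exact le_sqrt_of_sq_le (by nlinarith [abs_nonneg (u₁ - u₂)])
  have hroot : |√(u₁ ^ 2 - 4) - √(u₂ ^ 2 - 4)| ≤ √(|u₁ - u₂| * (u₁ + u₂)) := by
    calc |√(u₁ ^ 2 - 4) - √(u₂ ^ 2 - 4)| ≤ √|(u₁ ^ 2 - 4) - (u₂ ^ 2 - 4)| :=
          abs_sqrt_sub_sqrt_le_sqrt_abs_sub (by nlinarith) (by nlinarith)
      _ = √(|u₁ - u₂| * (u₁ + u₂)) := by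
          rw [show (u₁ ^ 2 - 4) - (u₂ ^ 2 - 4) = (u₁ - u₂) * (u₁ + u₂) by ring, abs_mul,
            abs_of_pos (by linarith : 0 < u₁ + u₂)]
  calc |(u₁ + √(u₁ ^ 2 - 4)) - (u₂ + √(u₂ ^ 2 - 4))|
      = |(u₁ - u₂) + (√(u₁ ^ 2 - 4) - √(u₂ ^ 2 - 4))| := by ring_nf
    _ ≤ |u₁ - u₂| + |√(u₁ ^ 2 - 4) - √(u₂ ^ 2 - 4)| := abs_add_le _ _
    _ ≤ 2 * √(|u₁ - u₂| * (u₁ + u₂)) := by linarith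

lemma sqrt_sqrt_mul_pow_three {d s : ℝ} (hd : 0 ≤ d) (hs : 0 ≤ s) :
    √(√(d * s ^ 3)) = d ^ ((1 : ℝ) / 4) * s ^ ((3 : ℝ) / 4) := by
  rw [sqrt_eq_rpow, sqrt_eq_rpow, ← rpow_mul (by positivity), mul_rpow hd (by positivity),
    ← rpow_natCast, ← rpow_mul hs]
  norm_num

section

variable {γ : ℝ}

lemma two_le_sqrt_add_inv_sqrt (hγ : 0 < γ) : 2 ≤ √γ + (√γ)⁻¹ := by
  have hs : 0 < √γ := sqrt_pos.2 hγ
  have : √γ * (√γ)⁻¹ = 1 := mul_inv_cancel₀ hs.ne'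
  nlinarith [sq_nonneg (√γ - 1), inv_pos.2 hs]

lemma Hfun_one_eq (hγ : 0 < γ) : Hfun γ 1 = √(2 + (√γ + (√γ)⁻¹)) := by
  have hs : 0 < √γ := sqrt_pos.2 hγ
  rw [Hfun, if_pos le_rfl]
  congr 1
  field_simp
  ring

lemma Hfun_one_nonneg (hγ : 0 < γ) : 0 ≤ Hfun γ 1 :=
  Hfun_one_eq hγ ▸ sqrt_nonneg _

lemma nonneg_of_Hfun_one_le (hγ : 0 < γ) {x : ℝ} (hx : Hfun γ 1 ≤ x) : 0 ≤ x :=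
  (Hfun_one_nonneg hγ).trans hx

lemma nonneg_of_sqrt_mul_Hfun_one_le (hγ : 0 < γ) {a x : ℝ} (hx : √a * Hfun γ 1 ≤ x) : 0 ≤ x :=
  (mul_nonneg (sqrt_nonneg a) (Hfun_one_nonneg hγ)).trans hx

lemma two_add_le_sq_of_Hfun_one_le (hγ : 0 < γ) {x : ℝ} (hx : Hfun γ 1 ≤ x) :
    2 + (√γ + (√γ)⁻¹) ≤ x ^ 2 := by
  have h2 : 0 ≤ 2 + (√γ + (√γ)⁻¹) := by linarith [two_le_sqrt_add_inv_sqrt hγ]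
  rw [Hfun_one_eq hγ] at hx
  calc 2 + (√γ + (√γ)⁻¹) = √(2 + (√γ + (√γ)⁻¹)) ^ 2 := (sq_sqrt h2).symm
    _ ≤ x ^ 2 := pow_le_pow_left₀ (sqrt_nonneg _) hx 2

theorem abs_Hinv_sub_Hinv_le (hγ : 0 < γ) {x₁ x₂ : ℝ} (h₁ : Hfun γ 1 ≤ x₁)
    (h₂ : Hfun γ 1 ≤ x₂) :
    |Hinv γ x₁ - Hinv γ x₂| ≤ |x₁ - x₂| ^ ((1 : ℝ) / 4) * (x₁ + x₂) ^ ((3 : ℝ) / 4) := by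
  have hx₁ := nonneg_of_Hfun_one_le hγ h₁
  have hx₂ := nonneg_of_Hfun_one_le hγ h₂
  have hs : 0 ≤ x₁ + x₂ := add_nonneg hx₁ hx₂
  set h := √γ + (√γ)⁻¹
  have hh : 2 ≤ h := two_le_sqrt_add_inv_sqrt hγ
  have hu₁ : 2 ≤ x₁ ^ 2 - h := by linarith [two_add_le_sq_of_Hfun_one_le hγ h₁]
  have hu₂ : 2 ≤ x₂ ^ 2 - h := by linarith [two_add_le_sq_of_Hfun_one_le hγ h₂]
  have hΔu : |(x₁ ^ 2 - h) - (x₂ ^ 2 - h)| * ((x₁ ^ 2 - h) + (x₂ ^ 2 - h))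
      ≤ |x₁ - x₂| * (x₁ + x₂) ^ 3 := by
    have hsum : (x₁ ^ 2 - h) + (x₂ ^ 2 - h) ≤ (x₁ + x₂) ^ 2 := by nlinarith
    rw [show (x₁ ^ 2 - h) - (x₂ ^ 2 - h) = (x₁ - x₂) * (x₁ + x₂) by ring, abs_mul,
      abs_of_nonneg hs]
    calc |x₁ - x₂| * (x₁ + x₂) * ((x₁ ^ 2 - h) + (x₂ ^ 2 - h))
        ≤ |x₁ - x₂| * (x₁ + x₂) * (x₁ + x₂) ^ 2 := by gcongr
      _ = |x₁ - x₂| * (x₁ + x₂) ^ 3 := by ring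
  have hinner := abs_add_sqrt_sq_sub_four_sub_le hu₁ hu₂
  calc |Hinv γ x₁ - Hinv γ x₂|
      ≤ √|(x₁ ^ 2 - h + √((x₁ ^ 2 - h) ^ 2 - 4)) / 2
          - (x₂ ^ 2 - h + √((x₂ ^ 2 - h) ^ 2 - 4)) / 2| :=
        abs_sqrt_sub_sqrt_le_sqrt_abs_sub (by positivity) (by positivity)
    _ ≤ √(√(|x₁ - x₂| * (x₁ + x₂) ^ 3)) := by
        gcongr
        rw [← sub_div, abs_div, abs_two, div_le_iff₀ two_pos, mul_comm]
        exact hinner.trans (by gcongr)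
    _ = |x₁ - x₂| ^ ((1 : ℝ) / 4) * (x₁ + x₂) ^ ((3 : ℝ) / 4) :=
        sqrt_sqrt_mul_pow_three (abs_nonneg _) hs

theorem abs_famFun_sub_famFun_le (hγ : 0 < γ) {a x₁ x₂ : ℝ} (ha : 0 < a)
    (h₁ : √a * Hfun γ 1 ≤ x₁) (h₂ : √a * Hfun γ 1 ≤ x₂) :
    |famFun γ a x₁ - famFun γ a x₂|
      ≤ a⁻¹ * (|x₁ - x₂| ^ ((1 : ℝ) / 4) * (x₁ + x₂) ^ ((3 : ℝ) / 4)) := by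
  have hsa : 0 < √a := sqrt_pos.2 ha
  set b := (√a)⁻¹
  have hb : 0 < b := inv_pos.2 hsa
  have hbx₁ : Hfun γ 1 ≤ b * x₁ := (le_inv_mul_iff₀ hsa).2 h₁
  have hbx₂ : Hfun γ 1 ≤ b * x₂ := (le_inv_mul_iff₀ hsa).2 h₂
  have hs : 0 ≤ x₁ + x₂ :=
    add_nonneg (nonneg_of_sqrt_mul_Hfun_one_le hγ h₁) (nonneg_of_sqrt_mul_Hfun_one_le hγ h₂)
  rw [famFun, famFun, if_pos h₁, if_pos h₂, ← mul_sub, abs_mul, abs_of_pos hb]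
  calc b * |Hinv γ (b * x₁) - Hinv γ (b * x₂)|
      ≤ b * (|b * x₁ - b * x₂| ^ ((1 : ℝ) / 4) * (b * x₁ + b * x₂) ^ ((3 : ℝ) / 4)) := by
        gcongr
        exact abs_Hinv_sub_Hinv_le hγ hbx₁ hbx₂
    _ = b * (b ^ ((1 : ℝ) / 4) * b ^ ((3 : ℝ) / 4))
          * (|x₁ - x₂| ^ ((1 : ℝ) / 4) * (x₁ + x₂) ^ ((3 : ℝ) / 4)) := by
        rw [← mul_sub, ← mul_add, abs_mul, abs_of_pos hb, mul_rpow hb.le (abs_nonneg _),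
          mul_rpow hb.le hs]
        ring
    _ = a⁻¹ * (|x₁ - x₂| ^ ((1 : ℝ) / 4) * (x₁ + x₂) ^ ((3 : ℝ) / 4)) := by
        rw [← rpow_add hb, show (1 : ℝ) / 4 + 3 / 4 = 1 by norm_num, rpow_one, ← mul_inv,
          mul_self_sqrt ha.le]

end

/-- **Hölder continuity of the inverse-shrinkage function.** -/
theorem statement15 (γ : ℝ) (hγ : 0 < γ) :
    -- (i) Hölder bound for `H⁻¹` on `[H(1), ∞)`
    (∀ x₁ x₂ : ℝ, Hfun γ 1 ≤ x₁ → Hfun γ 1 ≤ x₂ →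
      |Hinv γ x₁ - Hinv γ x₂| ≤
        2 * |x₁ - x₂| ^ ((1 : ℝ) / 4) * |x₁ + x₂| ^ ((3 : ℝ) / 4)) ∧
    -- (ii) `(4 a⁻¹ ζ^{3/4}, 1/4)`-Hölder continuity of `f_a` on `[τ_a, ζ]`
    (∀ a ζ : ℝ, 0 < a → 0 < ζ →
      ∀ x₁ ∈ Set.Icc (Real.sqrt a * Hfun γ 1) ζ,
        ∀ x₂ ∈ Set.Icc (Real.sqrt a * Hfun γ 1) ζ,
          |famFun γ a x₁ - famFun γ a x₂| ≤
            4 * a⁻¹ * ζ ^ ((3 : ℝ) / 4) * |x₁ - x₂| ^ ((1 : ℝ) / 4)) := by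
  refine ⟨fun x₁ x₂ h₁ h₂ => ?_, fun a ζ ha hζ x₁ hx₁ x₂ hx₂ => ?_⟩
  · have hs : 0 ≤ x₁ + x₂ := add_nonneg (nonneg_of_Hfun_one_le hγ h₁) (nonneg_of_Hfun_one_le hγ h₂)
    rw [abs_of_nonneg hs, mul_assoc]
    exact (abs_Hinv_sub_Hinv_le hγ h₁ h₂).trans
      (le_mul_of_one_le_left (mul_nonneg (by positivity) (rpow_nonneg hs _)) one_le_two)
  · have hsum : (x₁ + x₂) ^ ((3 : ℝ) / 4) ≤ 2 * ζ ^ ((3 : ℝ) / 4) := by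
      have hs : 0 ≤ x₁ + x₂ := add_nonneg (nonneg_of_sqrt_mul_Hfun_one_le hγ hx₁.1)
        (nonneg_of_sqrt_mul_Hfun_one_le hγ hx₂.1)
      calc (x₁ + x₂) ^ ((3 : ℝ) / 4) ≤ (2 * ζ) ^ ((3 : ℝ) / 4) := by
            gcongr; linarith [hx₁.2, hx₂.2]
        _ = 2 ^ ((3 : ℝ) / 4) * ζ ^ ((3 : ℝ) / 4) := mul_rpow zero_le_two hζ.le
        _ ≤ 2 * ζ ^ ((3 : ℝ) / 4) := by
            gcongr; exact rpow_le_self_of_one_le one_le_two (by norm_num)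
    calc |famFun γ a x₁ - famFun γ a x₂|
        ≤ a⁻¹ * (|x₁ - x₂| ^ ((1 : ℝ) / 4) * (x₁ + x₂) ^ ((3 : ℝ) / 4)) :=
          abs_famFun_sub_famFun_le hγ ha hx₁.1 hx₂.1
      _ ≤ a⁻¹ * (|x₁ - x₂| ^ ((1 : ℝ) / 4) * (2 * ζ ^ ((3 : ℝ) / 4))) := by gcongr
      _ ≤ 4 * a⁻¹ * ζ ^ ((3 : ℝ) / 4) * |x₁ - x₂| ^ ((1 : ℝ) / 4) := by
          have : 0 ≤ a⁻¹ * ζ ^ ((3 : ℝ) / 4) * |x₁ - x₂| ^ ((1 : ℝ) / 4) := by positivity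
          linarith

end
end

section
/- Pointwise concentration of a kernel density estimator: Let X₁,…,X_n be independent continuous real random variables with densities p_{X₁},…,p_{X_n}, and let K: ℝ → ℝ be square integrable. Set p_∞ := max_i ‖p_{X_i}‖_∞, M_∞ := ‖K‖_∞, σ² := ∫_ℝ K²(z) dz, and for h > 0 define Z_n(x) := (nh)^{-1} Σ_{i=1}^n K((x − X_i)/h). Assume nh ≥ 1. Then there exists a numerical constant c > 0 such that for all x ∈ ℝ and all t > 0, P( |Z_n(x) − E Z_n(x)| ≥ (nh)^{-1/2}·t ) ≤ 2·exp( − c·t² / (σ²·p_∞ + M_∞·t) ). -/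
/-!
The centred summands `K((x - X_i)/h) - E K((x - X_i)/h)` are independent, bounded by `2 M_∞`, and
have variance at most `p_∞ h σ²`: a density bounded by `p_∞` gives
`E K((x - X_i)/h)² ≤ p_∞ ∫ K((x - y)/h)² dy = p_∞ h σ²`. Bernstein's inequality (the Chernoff bound,
with `exp u ≤ 1 + u + u²` for `|u| ≤ 1`, at `λ = ε / (2 n v + b ε)`) bounds the probability that
the centred sum exceeds `ε = √(nh) t` in absolute value by `2 exp(-ε² / (4 (n v + b ε)))`, and
`√(nh) ≤ nh` turns this into the claim with `c = 1/8`.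
-/

open MeasureTheory ProbabilityTheory Real Finset

lemma rpow_neg_half_mul_le_abs_div_sub_div_iff {q : ℝ} (hq : 0 < q) (t a b : ℝ) :
    q ^ (-(1 : ℝ) / 2) * t ≤ |a / q - b / q| ↔ √q * t ≤ |a - b| := by
  have hscale : q ^ (-(1 : ℝ) / 2) * t * q = √q * t := by
    rw [neg_div, rpow_neg hq.le, ← sqrt_eq_rpow]
    field_simp
    rw [sq_sqrt hq.le, mul_comm]
  rw [← sub_div, abs_div, abs_of_pos hq, le_div_iff₀ hq, hscale]

lemma bernstein_exponent_le {N b ε : ℝ} (hN : 0 ≤ N) (hb : 0 < b) (hε : 0 < ε) :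
    -(ε / (2 * N + b * ε)) * ε + N * (ε / (2 * N + b * ε)) ^ 2
      ≤ -ε ^ 2 / (4 * (N + b * ε)) := by
  have hbε : 0 < b * ε := mul_pos hb hε
  have hD : 0 < 2 * N + b * ε := by linarith
  have hA : 0 < N + b * ε := by linarith
  have hlhs : -(ε / (2 * N + b * ε)) * ε + N * (ε / (2 * N + b * ε)) ^ 2
      = -(ε ^ 2 * (N + b * ε)) / (2 * N + b * ε) ^ 2 := by
    field_simp; ring
  rw [hlhs, neg_div, neg_div, neg_le_neg_iff, div_le_div_iff₀ (by positivity) (by positivity)]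
  have : (2 * N + b * ε) ^ 2 ≤ (2 * (N + b * ε)) ^ 2 := by gcongr; linarith
  nlinarith [sq_nonneg ε]

lemma bernstein_rate_le {q σP M t : ℝ} (hq : 1 ≤ q) (hσP : 0 ≤ σP) (hM : 0 < M) (ht : 0 < t) :
    -(√q * t) ^ 2 / (4 * (q * σP + 2 * M * (√q * t))) ≤ -(1 / 8 * t ^ 2) / (σP + M * t) := by
  have hq0 : 0 < q := one_pos.trans_le hq
  have hsq_le : √q ≤ q := by
    rw [sqrt_le_left hq0.le]; nlinarith
  have hsq : 0 < √q := sqrt_pos.2 hq0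
  rw [mul_pow, sq_sqrt hq0.le, neg_div, neg_div, neg_le_neg_iff,
    div_le_div_iff₀ (by positivity) (by positivity)]
  have : M * (√q * t) ≤ M * (q * t) := by gcongr
  nlinarith [mul_le_mul_of_nonneg_left this (sq_nonneg t),
    mul_nonneg (by positivity : (0:ℝ) ≤ q * t ^ 2) hσP]

lemma integral_comp_sub_div {E : Type*} [NormedAddCommGroup E] [NormedSpace ℝ E]
    (f : ℝ → E) (x h : ℝ) : ∫ y, f ((x - y) / h) = |h| • ∫ z, f z := by
  rw [integral_sub_left_eq_self (fun u => f (u / h)), Measure.integral_comp_div]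

lemma MeasureTheory.Integrable.comp_sub_div {E : Type*} [NormedAddCommGroup E] {f : ℝ → E}
    (hf : Integrable f) (x : ℝ) {h : ℝ} (hh : h ≠ 0) : Integrable fun y => f ((x - y) / h) :=
  (hf.comp_div hh).comp_sub_left x

lemma integral_comp_le_of_map_eq_withDensity {Ω E : Type*} [MeasurableSpace Ω]
    [MeasurableSpace E] {μ : Measure Ω} {ν : Measure E} {X : Ω → E} (hX : Measurable X) {p : E → ℝ}
    (hp : Measurable p) (hp_nonneg : ∀ y, 0 ≤ p y)
    (hlaw : μ.map X = ν.withDensity fun y => ENNReal.ofReal (p y)) {P : ℝ} (hpP : ∀ y, p y ≤ P)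
    {g : E → ℝ} (hg : Measurable g) (hg_nonneg : ∀ y, 0 ≤ g y) (hg_int : Integrable g ν) :
    ∫ ω, g (X ω) ∂μ ≤ P * ∫ y, g y ∂ν := by
  rw [← integral_map hX.aemeasurable hg.aestronglyMeasurable, hlaw,
    integral_withDensity_eq_integral_toReal_smul hp.ennreal_ofReal
      (ae_of_all _ fun _ => ENNReal.ofReal_lt_top), ← integral_const_mul]
  refine integral_mono_of_nonneg (ae_of_all _ fun y => ?_) (hg_int.const_mul P)
    (ae_of_all _ fun y => ?_)
  · simp only [smul_eq_mul, ENNReal.toReal_ofReal (hp_nonneg y)]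
    exact mul_nonneg (hp_nonneg y) (hg_nonneg y)
  · simp only [smul_eq_mul, ENNReal.toReal_ofReal (hp_nonneg y)]
    exact mul_le_mul_of_nonneg_right (hpP y) (hg_nonneg y)

namespace ProbabilityTheory

variable {Ω ι : Type*} {m : MeasurableSpace Ω} {μ : Measure Ω} [IsProbabilityMeasure μ]

lemma mgf_le_exp_sq_of_abs_le {W : Ω → ℝ} (hW : AEMeasurable W μ) {b v l : ℝ}
    (hbound : ∀ᵐ ω ∂μ, |W ω| ≤ b) (hmean : μ[W] = 0) (hvar : ∫ ω, W ω ^ 2 ∂μ ≤ v)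
    (hlb : |l| * b ≤ 1) :
    mgf W μ l ≤ exp (l ^ 2 * v) := by
  have hW_int : Integrable W μ := .of_bound hW.aestronglyMeasurable b (by simpa using hbound)
  have hW2_int : Integrable (fun ω => W ω ^ 2) μ :=
    .of_bound (hW.pow_const 2).aestronglyMeasurable (b ^ 2) <| hbound.mono fun ω hω => by
      simpa using pow_le_pow_left₀ (abs_nonneg _) hω 2
  have hquad_int : Integrable (fun ω => 1 + l * W ω + l ^ 2 * W ω ^ 2) μ :=
    ((integrable_const 1).add (hW_int.const_mul l)).add (hW2_int.const_mul (l ^ 2))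
  have hexp_le : ∀ᵐ ω ∂μ, exp (l * W ω) ≤ 1 + l * W ω + l ^ 2 * W ω ^ 2 :=
    hbound.mono fun ω hω => by
      have hu : |l * W ω| ≤ 1 := by
        rw [abs_mul]; exact (mul_le_mul_of_nonneg_left hω (abs_nonneg l)).trans hlb
      have := (abs_le.1 (abs_exp_sub_one_sub_id_le hu)).2
      linarith [mul_pow l (W ω) 2]
  calc mgf W μ l ≤ ∫ ω, 1 + l * W ω + l ^ 2 * W ω ^ 2 ∂μ :=
        integral_mono_of_nonneg (ae_of_all _ fun ω => (exp_pos _).le) hquad_int hexp_le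
    _ = 1 + l ^ 2 * ∫ ω, W ω ^ 2 ∂μ := by
        rw [integral_add (f := fun ω => 1 + l * W ω) ((integrable_const 1).add
          (hW_int.const_mul l)) (hW2_int.const_mul _),
          integral_add (f := fun _ => 1) (integrable_const 1) (hW_int.const_mul l),
          integral_const_mul, integral_const_mul, hmean]
        simp
    _ ≤ 1 + l ^ 2 * v := by gcongr
    _ ≤ exp (l ^ 2 * v) := by linarith [add_one_le_exp (l ^ 2 * v)]

lemma variance_comp_sub_div_le {X : Ω → ℝ} (hX : Measurable X) {p : ℝ → ℝ} (hp : Measurable p)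
    (hp_nonneg : ∀ y, 0 ≤ p y)
    (hlaw : μ.map X = (volume : Measure ℝ).withDensity fun y => ENNReal.ofReal (p y)) {P : ℝ}
    (hpP : ∀ y, p y ≤ P) {K : ℝ → ℝ} (hK : Measurable K) (hK2 : MemLp K 2) {h : ℝ} (hh : 0 < h)
    (x : ℝ) :
    variance (fun ω => K ((x - X ω) / h)) μ ≤ P * (h * ∫ z, K z ^ 2) := by
  have hKx : Measurable fun y => K ((x - y) / h) := hK.comp ((measurable_const_sub x).div_const h)
  calc variance (fun ω => K ((x - X ω) / h)) μ
      ≤ ∫ ω, K ((x - X ω) / h) ^ 2 ∂μ :=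
        variance_le_expectation_sq (X := fun ω => K ((x - X ω) / h))
          (hKx.comp hX).aestronglyMeasurable
    _ ≤ P * ∫ y, K ((x - y) / h) ^ 2 :=
      integral_comp_le_of_map_eq_withDensity hX hp hp_nonneg hlaw hpP (hKx.pow_const 2)
        (fun _ => sq_nonneg _) (hK2.integrable_sq.comp_sub_div x hh.ne')
    _ = P * (h * ∫ z, K z ^ 2) := by
      rw [integral_comp_sub_div (fun z => K z ^ 2), abs_of_pos hh, smul_eq_mul]

lemma measureReal_sum_ge_le_of_iIndepFun {W : ι → Ω → ℝ} (hind : iIndepFun W μ)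
    (hmeas : ∀ i, Measurable (W i)) {s : Finset ι} {b v ε : ℝ} (hb : 0 < b) (hv : 0 ≤ v)
    (hε : 0 < ε) (hbound : ∀ i ∈ s, ∀ᵐ ω ∂μ, |W i ω| ≤ b) (hmean : ∀ i ∈ s, μ[W i] = 0)
    (hvar : ∀ i ∈ s, ∫ ω, W i ω ^ 2 ∂μ ≤ v) :
    μ.real {ω | ε ≤ ∑ i ∈ s, W i ω} ≤ exp (-ε ^ 2 / (4 * (#s * v + b * ε))) := by
  set l := ε / (2 * (#s * v) + b * ε)
  have hD : 0 < 2 * (#s * v) + b * ε := by positivity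
  have hl : 0 ≤ l := by positivity
  have hlb : |l| * b ≤ 1 := by
    rw [abs_of_nonneg hl, div_mul_eq_mul_div, div_le_one hD]
    nlinarith [mul_nonneg (Nat.cast_nonneg #s) hv]
  have hexp_int : ∀ i ∈ s, Integrable (fun ω => exp (l * W i ω)) μ := fun i hi =>
    .of_bound ((hmeas i).const_mul l).exp.aestronglyMeasurable (exp (l * b)) <|
      (hbound i hi).mono fun ω hω => by
        rw [norm_of_nonneg (exp_pos _).le, exp_le_exp]
        exact mul_le_mul_of_nonneg_left ((le_abs_self _).trans hω) hl
  have hmgf : mgf (∑ i ∈ s, W i) μ l ≤ exp (#s * (l ^ 2 * v)) := by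
    rw [hind.mgf_sum hmeas, exp_nat_mul, ← prod_const]
    exact prod_le_prod (fun i _ => mgf_nonneg) fun i hi =>
      mgf_le_exp_sq_of_abs_le (hmeas i).aemeasurable (hbound i hi) (hmean i hi) (hvar i hi) hlb
  calc μ.real {ω | ε ≤ ∑ i ∈ s, W i ω}
      ≤ exp (-l * ε) * mgf (∑ i ∈ s, W i) μ l := by
        simpa only [Finset.sum_apply] using
          measure_ge_le_exp_mul_mgf ε hl (hind.integrable_exp_mul_sum hmeas hexp_int)
    _ ≤ exp (-l * ε) * exp (#s * (l ^ 2 * v)) := by gcongr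
    _ = exp (-l * ε + #s * v * l ^ 2) := by rw [← exp_add]; ring_nf
    _ ≤ exp (-ε ^ 2 / (4 * (#s * v + b * ε))) :=
        exp_le_exp.2 (bernstein_exponent_le (by positivity) hb hε)

theorem measureReal_abs_sum_sub_integral_ge_le {Y : ι → Ω → ℝ} (hind : iIndepFun Y μ)
    (hmeas : ∀ i, Measurable (Y i)) {s : Finset ι} {M v ε : ℝ} (hM : 0 < M) (hv : 0 ≤ v)
    (hε : 0 < ε) (hbound : ∀ i ∈ s, ∀ᵐ ω ∂μ, |Y i ω| ≤ M)
    (hvar : ∀ i ∈ s, variance (Y i) μ ≤ v) :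
    μ.real {ω | ε ≤ |∑ i ∈ s, (Y i ω - μ[Y i])|}
      ≤ 2 * exp (-ε ^ 2 / (4 * (#s * v + 2 * M * ε))) := by
  set W : ι → Ω → ℝ := fun i ω => Y i ω - μ[Y i]
  have hWmeas : ∀ i, Measurable (W i) := fun i => (hmeas i).sub_const _
  have hWind : iIndepFun W μ :=
    hind.comp (fun i y => y - ∫ ω, Y i ω ∂μ) fun _ => measurable_sub_const _
  have hWbound : ∀ i ∈ s, ∀ᵐ ω ∂μ, |W i ω| ≤ 2 * M := fun i hi => by
    have hmean_le : |μ[Y i]| ≤ M := by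
      simpa using norm_integral_le_of_norm_le_const (μ := μ) (f := Y i)
        (by simpa using hbound i hi)
    filter_upwards [hbound i hi] with ω hω
    linarith [abs_sub (Y i ω) (μ[Y i])]
  have hWmean : ∀ i ∈ s, μ[W i] = 0 := fun i hi => by
    have hint : Integrable (Y i) μ :=
      .of_bound (hmeas i).aestronglyMeasurable M (by simpa using hbound i hi)
    simp [W, integral_sub hint (integrable_const _)]
  have hWvar : ∀ i ∈ s, ∫ ω, W i ω ^ 2 ∂μ ≤ v := fun i hi =>
    (variance_eq_integral (hmeas i).aemeasurable).symm.trans_le (hvar i hi)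
  have h_upper := measureReal_sum_ge_le_of_iIndepFun hWind hWmeas (by positivity) hv hε hWbound
    hWmean hWvar
  have h_lower := measureReal_sum_ge_le_of_iIndepFun (W := fun i ω => -W i ω) (s := s)
    (b := 2 * M) (hWind.comp (fun _ => Neg.neg) fun _ => measurable_neg) (fun i => (hWmeas i).neg)
    (by positivity) hv hε (by simpa only [abs_neg] using hWbound)
    (fun i hi => by simp [integral_neg, hWmean i hi]) (by simpa only [neg_sq] using hWvar)
  calc μ.real {ω | ε ≤ |∑ i ∈ s, W i ω|}
      ≤ μ.real ({ω | ε ≤ ∑ i ∈ s, W i ω} ∪ {ω | ε ≤ ∑ i ∈ s, -W i ω}) := by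
        refine measureReal_mono (fun ω hω => ?_)
        simpa only [Set.mem_union, Set.mem_ofPred_eq, sum_neg_distrib] using le_abs.1 hω
    _ ≤ _ := measureReal_union_le _ _
    _ ≤ _ := by linarith

end ProbabilityTheory

/-- **Pointwise concentration of a kernel density estimator.**
There is a numerical constant `c > 0` such that for independent random variables
`X₁, …, X_n` with densities `p₁, …, p_n`, a bounded square integrable kernel `K`,
bandwidth `h` with `n h ≥ 1`, and all `x ∈ ℝ`, `t > 0`,
`P(|Z_n(x) - E Z_n(x)| ≥ (nh)^{-1/2} t) ≤ 2 exp(-c t² / (σ² p_∞ + M_∞ t))`. -/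
theorem statement18 :
    ∃ c : ℝ, 0 < c ∧
      ∀ (n : ℕ) (Ω : Type) [MeasureSpace Ω],
        IsProbabilityMeasure (volume : Measure Ω) →
        ∀ (X : Fin n → Ω → ℝ) (p : Fin n → ℝ → ℝ),
          (∀ i, Measurable (X i)) →
          iIndepFun X volume →
          (∀ i, Measurable (p i)) → (∀ i x, 0 ≤ p i x) →
          (∀ i, Measure.map (X i) volume
              = (volume : Measure ℝ).withDensity fun x => ENNReal.ofReal (p i x)) →
          ∀ K : ℝ → ℝ, Measurable K → MemLp K 2 (volume : Measure ℝ) →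
          ∀ pinf Minf : ℝ, (∀ i x, p i x ≤ pinf) → (∀ x, |K x| ≤ Minf) →
          ∀ h : ℝ, 0 < h → 1 ≤ (n : ℝ) * h →
          ∀ x t : ℝ, 0 < t →
            (volume : Measure Ω)
                {ω : Ω | ((n : ℝ) * h) ^ (-(1 : ℝ) / 2) * t ≤
                  |(∑ i, K ((x - X i ω) / h)) / (n * h) -
                    ∫ ω', (∑ i, K ((x - X i ω') / h)) / (n * h)|}
              ≤ ENNReal.ofReal
                  (2 * Real.exp (-(c * t ^ 2) / ((∫ z, K z ^ 2) * pinf + Minf * t))) := by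
  refine ⟨1 / 8, by norm_num, ?_⟩
  intro n Ω _ _ X p hX hind hp hp_nonneg hlaw K hK hK2 pinf Minf hpP hKM h hh hnh x t ht
  have hq : 0 < (n : ℝ) * h := one_pos.trans_le hnh
  rcases ((abs_nonneg (K 0)).trans (hKM 0)).eq_or_lt with hM0 | hM0
  · have hK0 : ∀ z, K z = 0 := fun z => abs_nonpos_iff.1 (hM0 ▸ hKM z)
    simp [hK0, not_le.2 (mul_pos (rpow_pos_of_pos hq _) ht)]
  have hn : 0 < n := Nat.pos_of_ne_zero fun hn0 => by norm_num [hn0] at hnh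
  have hpinf : 0 ≤ pinf := (hp_nonneg ⟨0, hn⟩ 0).trans (hpP _ 0)
  set Y : Fin n → Ω → ℝ := fun i ω => K ((x - X i ω) / h)
  have hKx : Measurable fun y => K ((x - y) / h) := hK.comp ((measurable_const_sub x).div_const h)
  have hY : ∀ i, Measurable (Y i) := fun i => hKx.comp (hX i)
  have hbern := measureReal_abs_sum_sub_integral_ge_le (s := univ) (ε := √(n * h) * t)
    (hind.comp (fun _ y => K ((x - y) / h)) fun _ => hKx) hY hM0 (by positivity) (by positivity) (fun i _ => ae_of_all _ fun ω => hKM _)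
    fun i _ => variance_comp_sub_div_le (hX i) (hp i) (hp_nonneg i) (hlaw i) (hpP i) hK hK2 hh x
  have hmean : ∫ ω, (∑ i, Y i ω) / (n * h) = (∑ i, ∫ ω, Y i ω) / (n * h) := by
    rw [integral_div, integral_finsetSum _ fun i _ =>
      .of_bound (hY i).aestronglyMeasurable Minf (ae_of_all _ fun ω => hKM _)]
  rw [card_univ, Fintype.card_fin, show (n : ℝ) * (pinf * (h * ∫ z, K z ^ 2))
    = n * h * ((∫ z, K z ^ 2) * pinf) by ring] at hbern
  calc volume {ω | ((n : ℝ) * h) ^ (-(1 : ℝ) / 2) * t ≤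
        |(∑ i, Y i ω) / (n * h) - ∫ ω', (∑ i, Y i ω') / (n * h)|}
      = volume {ω | √(n * h) * t ≤ |∑ i, (Y i ω - ∫ ω', Y i ω')|} := by
        simp only [hmean, rpow_neg_half_mul_le_abs_div_sub_div_iff hq, sum_sub_distrib]
    _ = ENNReal.ofReal (volume.real {ω | √(n * h) * t ≤ |∑ i, (Y i ω - ∫ ω', Y i ω')|}) :=
        (ofReal_measureReal).symm
    _ ≤ _ := by
      refine ENNReal.ofReal_le_ofReal (hbern.trans ?_)
      gcongr 2 * exp ?_
      exact bernstein_rate_le hnh (mul_nonneg (integral_nonneg fun _ => sq_nonneg _) hpinf) hM0 ht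
end
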